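/- arXiv:1307.4473 — 4 statements merged into one kernel-verified Lean document; each statement's English description precedes it below -/
import Mathlib

section
/- Every path of length t starting at a vertex x has weight at least (t - n)·μ(x), where n is the number of vertices. Consequently δ_t(x) ≥ t·μ(x) − n·W for every integer t ≥ 1, where W is the maximum edge weight. -/
open scoped ENNReal

/-- A walk of length `t` in the graph: `t+1` vertices with consecutive ones joined by edges
(edges and vertices may repeat). -/
def IsWalk {n : ℕ} (E : Fin n → Fin n → Prop) {t : ℕ} (p : Fin (t + 1) → Fin n) : Prop :=
  ∀ i : Fin t, E (p i.castSucc) (p i.succ)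

/-- The weight of a walk: the sum of its edge weights. -/
def walkWeight {n : ℕ} (w : Fin n → Fin n → ℕ) {t : ℕ} (p : Fin (t + 1) → Fin n) : ℕ :=
  ∑ i : Fin t, w (p i.castSucc) (p i.succ)
/-- `y` is reachable from `x` (by a path of length ≥ 0). -/
def Reachable {n : ℕ} (E : Fin n → Fin n → Prop) (x y : Fin n) : Prop :=
  ∃ (t : ℕ) (p : Fin (t + 1) → Fin n), IsWalk E p ∧ p 0 = x ∧ p (Fin.last t) = y

/-- The set of mean weights of cycles reachable from `x`. -/
def cycleMeans {n : ℕ} (E : Fin n → Fin n → Prop) (w : Fin n → Fin n → ℕ)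
    (x : Fin n) : Set ℝ :=
  {q | ∃ (t : ℕ) (p : Fin (t + 1) → Fin n), 0 < t ∧ IsWalk E p ∧
    p (Fin.last t) = p 0 ∧ Reachable E x (p 0) ∧ q = (walkWeight w p : ℝ) / t}

/-- `mcm E w x` is `μ(x)`, the minimum mean weight over all cycles reachable from `x`. -/
noncomputable def mcm {n : ℕ} (E : Fin n → Fin n → Prop) (w : Fin n → Fin n → ℕ)
    (x : Fin n) : ℝ :=
  sInf (cycleMeans E w x)
/-- `deltaNat E w t x` is `δ_t(x)`, the minimum weight of all paths of length exactly `t`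
starting at `x`. -/
noncomputable def deltaNat {n : ℕ} (E : Fin n → Fin n → Prop) (w : Fin n → Fin n → ℕ)
    (t : ℕ) (x : Fin n) : ℕ :=
  sInf {c : ℕ | ∃ p : Fin (t + 1) → Fin n, IsWalk E p ∧ p 0 = x ∧ c = walkWeight w p}

section Aux

variable {n : ℕ} {E : Fin n → Fin n → Prop} {w : Fin n → Fin n → ℕ}

/-- ℕ-indexed walk predicate. -/
def NWalk (E : Fin n → Fin n → Prop) (q : ℕ → Fin n) (t : ℕ) : Prop :=
  ∀ k < t, E (q k) (q (k + 1))

/-- ℕ-indexed walk weight. -/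
def nweight (w : Fin n → Fin n → ℕ) (q : ℕ → Fin n) (t : ℕ) : ℕ :=
  ∑ k ∈ Finset.range t, w (q k) (q (k + 1))

/-- From an NWalk, build a Fin-walk. -/
lemma toFin {q : ℕ → Fin n} {t : ℕ} (hq : NWalk E q t) :
    IsWalk E (fun i : Fin (t+1) => q i) ∧
    walkWeight w (fun i : Fin (t+1) => q i) = nweight w q t ∧
    (fun i : Fin (t+1) => q i) 0 = q 0 ∧
    (fun i : Fin (t+1) => q i) (Fin.last t) = q t := by
  refine ⟨fun i => ?_, ?_, rfl, rfl⟩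
  · simpa [Fin.coe_castSucc, Fin.val_succ] using hq i i.isLt
  · rw [walkWeight, nweight, ← Fin.sum_univ_eq_sum_range (fun k => w (q k) (q (k+1))) t]
    simp [Fin.coe_castSucc, Fin.val_succ]

/-- From a Fin-walk, build an NWalk. -/
lemma ofFin {t : ℕ} {p : Fin (t+1) → Fin n} (hp : IsWalk E p) :
    NWalk E (fun k => p ⟨min k t, by omega⟩) t ∧
    nweight w (fun k => p ⟨min k t, by omega⟩) t = walkWeight w p ∧
    (fun k => p ⟨min k t, by omega⟩) 0 = p 0 := by
  refine ⟨fun k hk => ?_, ?_, by simp⟩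
  · have := hp ⟨k, hk⟩
    convert this using 2 <;> exact Fin.ext (by simp [Fin.coe_castSucc, Fin.val_succ] <;> omega)
  · rw [walkWeight, nweight, ← Fin.sum_univ_eq_sum_range
      (fun k => w (p ⟨min k t, by omega⟩) (p ⟨min (k+1) t, by omega⟩)) t]
    apply Finset.sum_congr rfl
    intro i _
    congr 1 <;> exact congrArg p (Fin.ext (by simp [Fin.coe_castSucc, Fin.val_succ] <;> omega))

/-- every vertex of an NWalk starting at x is reachable from x -/
lemma reach_of_walk {q : ℕ → Fin n} {t : ℕ} (hq : NWalk E q t) (i : ℕ) (hi : i ≤ t) :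
    Reachable E (q 0) (q i) := by
  refine ⟨i, fun m : Fin (i+1) => q m, fun m => ?_, rfl, rfl⟩
  simpa [Fin.coe_castSucc, Fin.val_succ] using hq m (by omega)

/-- A repeated vertex yields a cycle whose mean belongs to cycleMeans. -/
lemma cycle_mem {x : Fin n} {q : ℕ → Fin n} {t i j : ℕ} (hq : NWalk E q t) (hq0 : q 0 = x)
    (hij : i < j) (hjt : j ≤ t) (heq : q i = q j) :
    ((∑ k ∈ Finset.Ico i j, w (q k) (q (k+1)) : ℕ) : ℝ) / ((j - i : ℕ) : ℝ)
      ∈ cycleMeans E w x := by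
  set d := j - i with hd
  refine ⟨d, fun m : Fin (d+1) => q (i + m), by omega, fun m => ?_, ?_, ?_, ?_⟩
  · have hmlt : (m : ℕ) < d := m.isLt
    have hE := hq (i + (m : ℕ)) (by omega)
    have h1 : i + ((m : ℕ) + 1) = i + (m : ℕ) + 1 := by omega
    simpa [Fin.coe_castSucc, Fin.val_succ, h1] using hE
  · show q (i + ((Fin.last d : Fin (d+1)) : ℕ)) = q (i + ((0 : Fin (d+1)) : ℕ))
    simp only [Fin.val_last, Fin.val_zero, Nat.add_zero]
    have hij' : i + d = j := by omega
    rw [hij', ← heq]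
  · have h0 : ((fun m : Fin (d+1) => q (i + (m : ℕ))) 0) = q i := by simp
    rw [h0, ← hq0]; exact reach_of_walk hq i (by omega)
  · have hw : walkWeight w (fun m : Fin (d+1) => q (i + (m : ℕ)))
        = ∑ k ∈ Finset.Ico i j, w (q k) (q (k+1)) := by
      rw [walkWeight, Finset.sum_Ico_eq_sum_range,
        ← Fin.sum_univ_eq_sum_range (fun k => w (q (i+k)) (q (i+k+1))) (j - i)]
      apply Finset.sum_congr rfl
      intro m _
      have h1 : i + ((m : ℕ) + 1) = i + (m : ℕ) + 1 := by omega
      simp [Fin.coe_castSucc, Fin.val_succ, h1]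
    rw [hw]

end Aux

section Aux2

variable {n : ℕ} {E : Fin n → Fin n → Prop} {w : Fin n → Fin n → ℕ}

lemma splice {q : ℕ → Fin n} {t i j : ℕ} (hq : NWalk E q t) (hij : i < j)
    (hjt : j ≤ t) (heq : q i = q j) :
    NWalk E (fun k => if k < i then q k else q (k + (j - i))) (t - (j - i)) ∧
    nweight w (fun k => if k < i then q k else q (k + (j - i))) (t - (j - i))
      + ∑ k ∈ Finset.Ico i j, w (q k) (q (k + 1)) = nweight w q t ∧
    (fun k => if k < i then q k else q (k + (j - i))) 0 = q 0 := by
  set d := j - i with hd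
  set q' : ℕ → Fin n := fun k => if k < i then q k else q (k + d) with hq'def
  have hq'val : ∀ k, i ≤ k → q' k = q (k + d) := fun k hk => if_neg (by omega)
  have hq'val2 : ∀ k, k < i → q' k = q k := fun k hk => if_pos hk
  have hstep : ∀ k, w (q' k) (q' (k+1)) =
      if k < i then w (q k) (q (k+1)) else w (q (k+d)) (q (k+d+1)) := by
    intro k
    by_cases hk : k < i
    · rw [if_pos hk, hq'val2 k hk]
      by_cases hk1 : k + 1 < i
      · rw [hq'val2 _ hk1]
      · have hk1' : k + 1 = i := by omega
        rw [hq'val _ (by omega)]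
        have h2 : k + 1 + d = j := by omega
        rw [h2, ← heq, ← hk1']
    · rw [if_neg hk, hq'val _ (by omega), hq'val _ (by omega)]
      have h2 : k + 1 + d = k + d + 1 := by omega
      rw [h2]
  have hwalk : NWalk E q' (t - d) := by
    intro k hk
    by_cases hkc : k < i
    · rw [hq'val2 k hkc]
      by_cases hk1 : k + 1 < i
      · rw [hq'val2 _ hk1]; exact hq k (by omega)
      · have hk1' : k + 1 = i := by omega
        rw [hq'val _ (by omega)]
        have h2 : k + 1 + d = j := by omega
        rw [h2, ← heq, ← hk1']
        exact hq k (by omega)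
    · rw [hq'val _ (by omega), hq'val _ (by omega)]
      have h2 : k + 1 + d = k + d + 1 := by omega
      rw [h2]
      exact hq (k + d) (by omega)
  have h0 : q' 0 = q 0 := by
    by_cases h : 0 < i
    · exact if_pos h
    · have hi0 : i = 0 := by omega
      rw [hq'val 0 (by omega)]
      have h2 : 0 + d = j := by omega
      rw [h2, ← heq, hi0]
  refine ⟨hwalk, ?_, h0⟩
  have e1 : nweight w q' (t - d) = (∑ k ∈ Finset.range i, w (q k) (q (k+1)))
      + ∑ k ∈ Finset.Ico i (t - d), w (q (k+d)) (q (k+d+1)) := by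
    rw [nweight, Finset.range_eq_Ico,
      ← Finset.sum_Ico_consecutive _ (Nat.zero_le i) (show i ≤ t - d by omega),
      ← Finset.range_eq_Ico]
    congr 1
    · exact Finset.sum_congr rfl fun k hk => by
        rw [hstep k, if_pos (Finset.mem_range.mp hk)]
    · exact Finset.sum_congr rfl fun k hk => by
        rw [hstep k, if_neg (by have := (Finset.mem_Ico.mp hk).1; omega)]
  have e2 : ∑ k ∈ Finset.Ico i (t - d), w (q (k+d)) (q (k+d+1))
      = ∑ k ∈ Finset.Ico j t, w (q k) (q (k+1)) := by
    rw [Finset.sum_Ico_eq_sum_range, Finset.sum_Ico_eq_sum_range]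
    have hlen : t - d - i = t - j := by omega
    rw [hlen]
    apply Finset.sum_congr rfl
    intro k _
    have h1 : i + k + d = j + k := by omega
    rw [h1]
  have e3 : nweight w q t = (∑ k ∈ Finset.range i, w (q k) (q (k+1)))
      + ((∑ k ∈ Finset.Ico i j, w (q k) (q (k+1)))
        + ∑ k ∈ Finset.Ico j t, w (q k) (q (k+1))) := by
    rw [nweight, Finset.range_eq_Ico,
      ← Finset.sum_Ico_consecutive _ (Nat.zero_le i) (show i ≤ t by omega),
      ← Finset.sum_Ico_consecutive _ (le_of_lt hij) hjt, ← Finset.range_eq_Ico]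
  rw [e1, e2, e3]
  ring

lemma cycleMeans_nonneg {x : Fin n} : ∀ r ∈ cycleMeans E w x, (0:ℝ) ≤ r := by
  rintro r ⟨t, p, ht, -, -, -, hr⟩
  rw [hr]
  positivity

lemma mcm_nonneg {x : Fin n} (hcyc : (cycleMeans E w x).Nonempty) : 0 ≤ mcm E w x :=
  le_csInf hcyc (fun r hr => cycleMeans_nonneg r hr)

lemma mcm_le {x : Fin n} {r : ℝ} (hmem : r ∈ cycleMeans E w x) : mcm E w x ≤ r :=
  csInf_le ⟨0, fun _ hy => cycleMeans_nonneg _ hy⟩ hmem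

lemma key (x : Fin n) (hcyc : (cycleMeans E w x).Nonempty) :
    ∀ t, ∀ q : ℕ → Fin n, NWalk E q t → q 0 = x →
      ((t : ℝ) - (n : ℝ)) * mcm E w x ≤ (nweight w q t : ℝ) := by
  intro t
  induction t using Nat.strong_induction_on with
  | _ t IH =>
    intro q hq hq0
    by_cases htn : t < n
    · have h1 : ((t:ℝ) - (n:ℝ)) ≤ 0 := by
        have : (t:ℝ) ≤ (n:ℝ) := by exact_mod_cast Nat.le_of_lt htn
        linarith
      have h2 := mcm_nonneg hcyc
      have h3 : (0:ℝ) ≤ (nweight w q t : ℝ) := Nat.cast_nonneg _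
      nlinarith
    · obtain ⟨a, ha, b, hb, hab, hqab⟩ :=
        Finset.exists_ne_map_eq_of_card_lt_of_maps_to
          (s := Finset.range (t+1)) (t := (Finset.univ : Finset (Fin n)))
          (by simp; omega) (fun k _ => Finset.mem_univ (q k))
      simp only [Finset.mem_range] at ha hb
      set i := min a b with hi
      set j := max a b with hj
      have hij : i < j := by omega
      have hjt : j ≤ t := by omega
      have heqij : q i = q j := by
        rcases le_total a b with h | h
        · rw [hi, hj, min_eq_left h, max_eq_right h, hqab]
        · rw [hi, hj, min_eq_right h, max_eq_left h, hqab]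
      obtain ⟨hw1, hw2, hw3⟩ := splice (w := w) hq hij hjt heqij
      set d := j - i with hd
      have hd0 : 0 < d := by omega
      have hdt : d ≤ t := by omega
      have IH' := IH (t - d) (by omega) _ hw1 (by simpa using hw3.trans hq0)
      have hmem := cycle_mem (w := w) hq hq0 hij hjt heqij
      have hle := mcm_le hmem
      set S := ∑ k ∈ Finset.Ico i j, w (q k) (q (k+1)) with hS
      have hdmu : mcm E w x * (d:ℝ) ≤ (S:ℝ) := by
        rw [← le_div_iff₀ (by positivity : (0:ℝ) < (d:ℝ))]
        exact hle
      have hcast : (nweight w (fun k => if k < i then q k else q (k + d)) (t - d) : ℝ)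
          + (S : ℝ) = (nweight w q t : ℝ) := by exact_mod_cast congrArg Nat.cast hw2
      have hsplit : ((t:ℝ) - (n:ℝ)) * mcm E w x
          = (((t - d : ℕ):ℝ) - (n:ℝ)) * mcm E w x + mcm E w x * (d:ℝ) := by
        rw [Nat.cast_sub hdt]
        ring
      rw [hsplit]
      linarith

lemma exwalk (hout : ∀ v : Fin n, ∃ u : Fin n, E v u) (x : Fin n) (t : ℕ) :
    ∃ q : ℕ → Fin n, NWalk E q t ∧ q 0 = x := by
  refine ⟨fun k => Nat.rec x (fun _ prev => Classical.choose (hout prev)) k,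
    fun k _ => ?_, rfl⟩
  exact Classical.choose_spec (hout _)

end Aux2


/-- Every path of length `t` starting at `x` has weight at least
`(t - n)·μ(x)`; consequently `δ_t(x) ≥ t·μ(x) − n·W` for every integer `t ≥ 1`, where `W`
is the maximum edge weight. -/
theorem delta_lower_bound {n : ℕ} (E : Fin n → Fin n → Prop)
    (w : Fin n → Fin n → ℕ) (hout : ∀ v : Fin n, ∃ u : Fin n, E v u)
    (W : ℕ) (hW : ∀ a b : Fin n, E a b → w a b ≤ W)
    (x : Fin n) (hcyc : (cycleMeans E w x).Nonempty) (t : ℕ) (ht : 1 ≤ t) :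
    (∀ p : Fin (t + 1) → Fin n, IsWalk E p → p 0 = x →
      ((t : ℝ) - (n : ℝ)) * mcm E w x ≤ (walkWeight w p : ℝ)) ∧
    (t : ℝ) * mcm E w x - (n : ℝ) * (W : ℝ) ≤ (deltaNat E w t x : ℝ) := by
  have main1 : ∀ p : Fin (t + 1) → Fin n, IsWalk E p → p 0 = x →
      ((t : ℝ) - (n : ℝ)) * mcm E w x ≤ (walkWeight w p : ℝ) := by
    intro p hp hp0
    obtain ⟨h1, h2, h3⟩ := ofFin (w := w) hp
    have hk := key x hcyc t _ h1 (by simpa using h3.trans hp0)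
    rw [h2] at hk
    exact hk
  refine ⟨main1, ?_⟩
  -- μ ≤ W
  have hμW : mcm E w x ≤ (W : ℝ) := by
    obtain ⟨r, hr⟩ := hcyc
    obtain ⟨t', p', ht', hp', hc1, hc2, hrq⟩ := hr
    have hSW : walkWeight w p' ≤ t' * W := by
      rw [walkWeight]
      calc ∑ i : Fin t', w (p' i.castSucc) (p' i.succ)
          ≤ ∑ _i : Fin t', W := Finset.sum_le_sum fun i _ => hW _ _ (hp' i)
        _ = t' * W := by simp [Finset.sum_const, Finset.card_univ, mul_comm]
    have hrW : r ≤ (W : ℝ) := by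
      rw [hrq, div_le_iff₀ (by positivity : (0:ℝ) < (t' : ℝ))]
      calc (walkWeight w p' : ℝ) ≤ ((t' * W : ℕ) : ℝ) := by exact_mod_cast hSW
        _ = (W:ℝ) * (t':ℝ) := by push_cast; ring
    exact le_trans (mcm_le ⟨t', p', ht', hp', hc1, hc2, hrq⟩) hrW
  obtain ⟨q, hq, hq0⟩ := exwalk hout x t
  obtain ⟨hpw, hpe, hp0, -⟩ := toFin (w := w) hq
  have hne : {c : ℕ | ∃ p : Fin (t+1) → Fin n,
      IsWalk E p ∧ p 0 = x ∧ c = walkWeight w p}.Nonempty :=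
    ⟨walkWeight w (fun i : Fin (t+1) => q i), fun i : Fin (t+1) => q i, hpw,
      by simpa using hq0, rfl⟩
  have hmem := Nat.sInf_mem hne
  obtain ⟨p, hp, hp0', hc⟩ := hmem
  have hb := main1 p hp hp0'
  have hδ : (deltaNat E w t x : ℝ) = (walkWeight w p : ℝ) := by
    rw [deltaNat, hc]
  rw [← hδ] at hb
  have hnμ : (n:ℝ) * mcm E w x ≤ (n:ℝ) * W :=
    mul_le_mul_of_nonneg_left hμW (Nat.cast_nonneg n)
  have hring : ((t:ℝ) - n) * mcm E w x = (t:ℝ) * mcm E w x - (n:ℝ) * mcm E w x := by ring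
  linarith
end

section
/- For every vertex x and every integer t ≥ 1, the minimum weight of a path of length t starting at x satisfies δ_t(x) ≤ t·μ(x) + n·W, where n is the number of vertices and W is the maximum edge weight. -/
open scoped ENNReal
open Finset


lemma mod_succ {P : ℕ} (hP : 0 < P) (m : ℕ) :
    (m + 1) % P = if m % P + 1 = P then 0 else m % P + 1 := by
  have h1 : (m + 1) % P = (m % P + 1) % P := by
    conv_lhs => rw [← Nat.mod_add_div m P]
    rw [show m % P + P * (m / P) + 1 = m % P + 1 + P * (m / P) by ring,
      Nat.add_mul_mod_self_left]
  rw [h1]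
  split
  · next h => rw [h, Nat.mod_self]
  · next h =>
    have := Nat.mod_lt m hP
    exact Nat.mod_eq_of_lt (by omega)

lemma sum_range_add' {M : Type*} [AddCommMonoid M] (f : ℕ → M) (A B : ℕ) :
    ∑ k ∈ range (A + B), f k = ∑ k ∈ range A, f k + ∑ m ∈ range B, f (A + m) := by
  induction B with
  | zero => simp
  | succ B ih =>
    rw [show A + (B+1) = (A+B)+1 by ring, Finset.sum_range_succ, ih,
      Finset.sum_range_succ, add_assoc]

section aux
variable {n : ℕ} (E : Fin n → Fin n → Prop) (w : Fin n → Fin n → ℕ)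

def NatWalk (g : ℕ → Fin n) : Prop := ∀ k, E (g k) (g (k + 1))

def Per (g : ℕ → Fin n) (a L : ℕ) : Prop := ∀ k, a ≤ k → g (k + L) = g k

def win (g : ℕ → Fin n) (a L : ℕ) : ℕ := ∑ m ∈ range L, w (g (a + m)) (g (a + m + 1))

variable {E w}

lemma win_step {g : ℕ → Fin n} {a L : ℕ} (hper : Per g a L) {b : ℕ} (hb : a ≤ b) :
    win w g (b + 1) L = win w g b L := by
  rcases Nat.eq_zero_or_pos L with hL | hL
  · simp [win, hL]
  obtain ⟨L', rfl⟩ : ∃ L', L = L' + 1 := ⟨L - 1, by omega⟩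
  unfold win
  rw [Finset.sum_range_succ, Finset.sum_range_succ']
  congr 1
  · apply Finset.sum_congr rfl
    intro m hm
    congr 2 <;> omega
  · have e1 : g (b + 1 + L') = g b := by
      rw [show b + 1 + L' = b + (L' + 1) by ring]; exact hper b hb
    have e2 : g (b + 1 + L' + 1) = g (b + 1) := by
      rw [show b + 1 + L' + 1 = (b + 1) + (L' + 1) by ring]; exact hper (b + 1) (by omega)
    rw [e1, e2]
    congr 2 <;> omega

lemma win_shift {g : ℕ → Fin n} {a L : ℕ} (hper : Per g a L) {b : ℕ} (hb : a ≤ b) :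
    win w g b L = win w g a L := by
  obtain ⟨d, rfl⟩ : ∃ d, b = a + d := ⟨b - a, by omega⟩
  clear hb
  induction d with
  | zero => rfl
  | succ d ih => rw [show a + (d+1) = (a+d) + 1 by ring, win_step hper (by omega), ih]

lemma periodic_sum {g : ℕ → Fin n} {a L : ℕ} (hper : Per g a L) (e r : ℕ) :
    ∑ m ∈ range (e * L + r), w (g (a + m)) (g (a + m + 1))
      = e * win w g a L + ∑ m ∈ range r, w (g (a + m)) (g (a + m + 1)) := by
  induction e with
  | zero => simp
  | succ e ih =>
    rw [show (e + 1) * L + r = L + (e * L + r) by ring, sum_range_add']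
    have h2 : ∑ m ∈ range (e * L + r), w (g (a + (L + m))) (g (a + (L + m) + 1))
        = ∑ m ∈ range (e * L + r), w (g (a + m)) (g (a + m + 1)) := by
      apply Finset.sum_congr rfl
      intro m _
      have e1 : g (a + (L + m)) = g (a + m) := by
        rw [show a + (L + m) = (a + m) + L by ring]; exact hper (a + m) (by omega)
      have e2 : g (a + (L + m) + 1) = g (a + m + 1) := by
        rw [show a + (L + m) + 1 = (a + m + 1) + L by ring]; exact hper (a + m + 1) (by omega)
      rw [e1, e2]
    rw [h2, ih, win]
    ring

/-! ### splice -/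

def spliceF (g : ℕ → Fin n) (b s : ℕ) : ℕ → Fin n :=
  fun k => if k < b then g k else g (s + (k - b))

variable {x : Fin n}

lemma splice_walk {g : ℕ → Fin n} {b s : ℕ} (hg : NatWalk E g) (hbs : g s = g b) :
    NatWalk E (spliceF g b s) := by
  intro k
  unfold spliceF
  rcases lt_trichotomy (k + 1) b with h | h | h
  · rw [if_pos h, if_pos (by omega)]
    exact hg k
  · rw [if_pos (by omega), if_neg (by omega)]
    have : s + (k + 1 - b) = s := by omega
    rw [this, hbs, ← h]
    exact hg k
  · rw [if_neg (by omega), if_neg (by omega)]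
    have : s + (k + 1 - b) = s + (k - b) + 1 := by omega
    rw [this]
    exact hg _

lemma splice_zero {g : ℕ → Fin n} {b s : ℕ} (hbs : g s = g b) :
    spliceF g b s 0 = g 0 := by
  unfold spliceF
  split
  · rfl
  · next h =>
    have : b = 0 := by omega
    subst this
    simpa using hbs

/-! ### cyc -/

def cycF (g : ℕ → Fin n) (u v : ℕ) : ℕ → Fin n :=
  fun k => if k < u then g k else g (u + (k - u) % (v - u))

lemma cyc_eq_of_le {g : ℕ → Fin n} {u v : ℕ} (huv : u < v) (hgv : g u = g v)
    {k : ℕ} (hk : k ≤ v) : cycF g u v k = g k := by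
  unfold cycF
  split
  · rfl
  · next h =>
    rcases eq_or_lt_of_le hk with rfl | hkv
    · rw [Nat.mod_self, Nat.add_zero]
      exact hgv
    · rw [Nat.mod_eq_of_lt (by omega)]
      congr 1
      omega

lemma cyc_per {g : ℕ → Fin n} {u v : ℕ} (huv : u < v) :
    Per (cycF g u v) u (v - u) := by
  intro k hk
  unfold cycF
  rw [if_neg (by omega), if_neg (by omega)]
  congr 1
  rw [show k + (v - u) - u = (k - u) + (v - u) by omega, Nat.add_mod_right]

lemma cyc_walk {g : ℕ → Fin n} {u v : ℕ} (hg : NatWalk E g) (huv : u < v)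
    (hgv : g u = g v) : NatWalk E (cycF g u v) := by
  set P := v - u with hP
  have hP0 : 0 < P := by omega
  intro k
  by_cases hku : k + 1 ≤ u
  · rw [show cycF g u v k = g k from cyc_eq_of_le huv hgv (by omega),
      show cycF g u v (k + 1) = g (k + 1) from cyc_eq_of_le huv hgv (by omega)]
    exact hg k
  · have hk : u ≤ k := by omega
    have hmod : (k - u) % P < P := Nat.mod_lt _ hP0
    have hk1 : cycF g u v k = g (u + (k - u) % P) := by
      unfold cycF; rw [if_neg (by omega)]
    have hsucc : (k + 1 - u) = (k - u) + 1 := by omega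
    have hk2 : cycF g u v (k + 1) = g (u + ((k - u) + 1) % P) := by
      unfold cycF; rw [if_neg (by omega), hsucc]
    rw [hk1, hk2, mod_succ hP0]
    split
    · next h =>
      have e1 : u + (k - u) % P = v - 1 := by omega
      have e2 : g (u + 0) = g (v - 1 + 1) := by
        rw [show v - 1 + 1 = v by omega, ← hgv]; simp
      rw [e1, e2]
      exact hg (v - 1)
    · next h =>
      rw [show u + ((k - u) % P + 1) = u + (k - u) % P + 1 by ring]
      exact hg _

lemma cyc_zero {g : ℕ → Fin n} {u v : ℕ} (huv : u < v) (hgv : g u = g v) :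
    cycF g u v 0 = g 0 := cyc_eq_of_le huv hgv (by omega)

lemma cyc_win {g : ℕ → Fin n} {u v : ℕ} (huv : u < v) (hgv : g u = g v) :
    win w (cycF g u v) u (v - u) = ∑ m ∈ range (v - u), w (g (u + m)) (g (u + m + 1)) := by
  apply Finset.sum_congr rfl
  intro m hm
  rw [Finset.mem_range] at hm
  rw [cyc_eq_of_le huv hgv (by omega), cyc_eq_of_le huv hgv (by omega)]

lemma reduce {x : Fin n} (q : ℝ) :
    ∀ (L a : ℕ) (g : ℕ → Fin n), NatWalk E g → g 0 = x → 0 < L → Per g a L →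
      (win w g a L : ℝ) ≤ q * L →
      ∃ (L' a' : ℕ) (g' : ℕ → Fin n), NatWalk E g' ∧ g' 0 = x ∧ 0 < L' ∧ Per g' a' L' ∧
        a' + L' ≤ n ∧ (win w g' a' L' : ℝ) ≤ q * L' := by
  intro L
  induction L using Nat.strong_induction_on with
  | _ L ihL =>
  intro a
  induction a using Nat.strong_induction_on with
  | _ a iha =>
  intro g hgw hg0 hL hper hsum
  by_cases hn : a + L ≤ n
  · exact ⟨L, a, g, hgw, hg0, hL, hper, hn, hsum⟩
  push_neg at hn
  obtain ⟨k1, k2, hne, heq⟩ := Fintype.exists_ne_map_eq_of_card_lt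
      (fun k : Fin (a + L) => g k) (by simpa using hn)
  obtain ⟨i, j, hij, hjlt, hgij⟩ : ∃ i j : ℕ, i < j ∧ j < a + L ∧ g i = g j := by
    rcases lt_or_gt_of_ne hne with h | h
    · exact ⟨k1, k2, h, k2.isLt, heq⟩
    · exact ⟨k2, k1, h, k1.isLt, heq.symm⟩
  by_cases hia : i < a
  · -- cut the approach path
    set a' : ℕ := if j ≤ a then a - (j - i) else i with ha'
    have ha'i : i ≤ a' := by rw [ha']; split <;> omega
    have ha'a : a' < a := by rw [ha']; split <;> omega
    have hji : a ≤ a' + (j - i) := by rw [ha']; split <;> omega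
    have hwalk' : NatWalk E (spliceF g i j) := splice_walk hgw hgij.symm
    have h0' : spliceF g i j 0 = x := by rw [splice_zero hgij.symm, hg0]
    have hper' : Per (spliceF g i j) a' L := by
      intro k hk
      have hki : i ≤ k := le_trans ha'i hk
      unfold spliceF
      rw [if_neg (by omega), if_neg (by omega),
        show j + (k + L - i) = (j + (k - i)) + L by omega]
      exact hper _ (by omega)
    have hwin' : win w (spliceF g i j) a' L = win w g (a' + (j - i)) L := by
      apply Finset.sum_congr rfl
      intro m hm
      unfold spliceF
      rw [if_neg (by omega), if_neg (by omega)]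
      congr 2 <;> omega
    have hwin2 : win w (spliceF g i j) a' L = win w g a L := by
      rw [hwin', win_shift hper hji]
    exact iha a' ha'a (spliceF g i j) hwalk' h0' hL hper' (by rw [hwin2]; exact hsum)
  · -- split the cycle
    have hai : a ≤ i := by omega
    have hjiL : j < i + L := by omega
    have hgiL : g i = g (i + L) := (hper i hai).symm
    have hgjv : g j = g (i + L) := by rw [← hgij]; exact hgiL
    have hwi : win w g i L = win w g a L := win_shift hper hai
    have hsplit : win w g i L
        = (∑ m ∈ range (j - i), w (g (i + m)) (g (i + m + 1)))
          + ∑ m ∈ range (i + L - j), w (g (j + m)) (g (j + m + 1)) := by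
      unfold win
      conv_lhs => rw [show L = (j - i) + (i + L - j) by omega, sum_range_add']
      congr 1
      apply Finset.sum_congr rfl
      intro m _
      rw [show i + (j - i + m) = j + m by omega]
    have hchoice : ((∑ m ∈ range (j - i), w (g (i + m)) (g (i + m + 1)) : ℕ) : ℝ)
          ≤ q * (j - i : ℕ)
        ∨ ((∑ m ∈ range (i + L - j), w (g (j + m)) (g (j + m + 1)) : ℕ) : ℝ)
          ≤ q * (i + L - j : ℕ) := by
      by_contra hcon
      push_neg at hcon
      have hsum2 : ((win w g a L : ℕ) : ℝ)
          = ((∑ m ∈ range (j - i), w (g (i + m)) (g (i + m + 1)) : ℕ) : ℝ)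
            + ((∑ m ∈ range (i + L - j), w (g (j + m)) (g (j + m + 1)) : ℕ) : ℝ) := by
        rw [← hwi, hsplit]; push_cast; ring
      have hLL : (L : ℝ) = ((j - i : ℕ) : ℝ) + ((i + L - j : ℕ) : ℝ) := by
        have : L = (j - i) + (i + L - j) := by omega
        exact_mod_cast congrArg (Nat.cast : ℕ → ℝ) this
      rw [hLL] at hsum
      have h1 := hcon.1
      have h2 := hcon.2
      nlinarith [hsum, hsum2]
    rcases hchoice with hc | hc
    · -- inner cycle
      refine ihL (j - i) (by omega) i (cycF g i j) (cyc_walk hgw hij hgij)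
        (by rw [cyc_zero hij hgij, hg0]) (by omega) (cyc_per hij) ?_
      rw [cyc_win hij hgij]
      exact hc
    · -- outer cycle
      refine ihL (i + L - j) (by omega) j (cycF g j (i + L)) (cyc_walk hgw hjiL hgjv)
        (by rw [cyc_zero hjiL hgjv, hg0]) (by omega) (cyc_per hjiL) ?_
      rw [cyc_win hjiL hgjv]
      exact hc

lemma sum_bound {g : ℕ → Fin n} {a L W t : ℕ} {q : ℝ} (hper : Per g a L) (hL : 0 < L)
    (han : a + L ≤ n) (hS : (win w g a L : ℝ) ≤ q * L) (hq : 0 ≤ q)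
    (hWb : ∀ k, w (g k) (g (k + 1)) ≤ W) :
    ((∑ k ∈ range t, w (g k) (g (k + 1)) : ℕ) : ℝ) ≤ t * q + n * W := by
  have hbnd : ∀ b c : ℕ, (∑ k ∈ range c, w (g (b + k)) (g (b + k + 1))) ≤ c * W := by
    intro b c
    calc (∑ k ∈ range c, w (g (b + k)) (g (b + k + 1)))
        ≤ ∑ _k ∈ range c, W := Finset.sum_le_sum (fun k _ => hWb (b + k))
      _ = c * W := by simp [mul_comm]
  have hWr : (0 : ℝ) ≤ W := Nat.cast_nonneg W
  by_cases hta : t ≤ a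
  · have h1 : (∑ k ∈ range t, w (g k) (g (k + 1))) ≤ t * W := by
      have := hbnd 0 t
      simpa using this
    have htn : (t : ℝ) ≤ n := by exact_mod_cast (show t ≤ n by omega)
    have h2 : ((∑ k ∈ range t, w (g k) (g (k + 1)) : ℕ) : ℝ) ≤ (t : ℝ) * W := by
      exact_mod_cast h1
    have h3 : (t : ℝ) * W ≤ (n : ℝ) * W := mul_le_mul_of_nonneg_right htn hWr
    have h4 : (0 : ℝ) ≤ (t : ℝ) * q := mul_nonneg (Nat.cast_nonneg t) hq
    linarith
  · push_neg at hta
    set m0 := t - a with hm0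
    set e := m0 / L with he
    set r := m0 % L with hr
    have hdm : e * L + r = m0 := Nat.div_add_mod' m0 L
    have hrL : r < L := Nat.mod_lt _ hL
    have hsplit : (∑ k ∈ range t, w (g k) (g (k + 1)))
        = (∑ k ∈ range a, w (g k) (g (k + 1)))
          + ∑ m ∈ range m0, w (g (a + m)) (g (a + m + 1)) := by
      rw [show t = a + m0 by omega, sum_range_add']
    have hper2 : (∑ m ∈ range m0, w (g (a + m)) (g (a + m + 1)))
        = e * win w g a L + ∑ m ∈ range r, w (g (a + m)) (g (a + m + 1)) := by
      rw [← hdm]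
      exact periodic_sum hper e r
    have hA : (∑ k ∈ range a, w (g k) (g (k + 1))) ≤ a * W := by
      have := hbnd 0 a; simpa using this
    have hR : (∑ m ∈ range r, w (g (a + m)) (g (a + m + 1))) ≤ r * W := hbnd a r
    have htotal : ((∑ k ∈ range t, w (g k) (g (k + 1)) : ℕ) : ℝ)
        ≤ (a : ℝ) * W + (e : ℝ) * (win w g a L : ℝ) + (r : ℝ) * W := by
      rw [hsplit, hper2]
      push_cast
      have hAr : ((∑ k ∈ range a, w (g k) (g (k + 1)) : ℕ) : ℝ) ≤ (a : ℝ) * W := by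
        exact_mod_cast hA
      have hRr : ((∑ m ∈ range r, w (g (a + m)) (g (a + m + 1)) : ℕ) : ℝ) ≤ (r : ℝ) * W := by
        exact_mod_cast hR
      push_cast at hAr hRr
      linarith
    have h1 : (e : ℝ) * (win w g a L : ℝ) ≤ (e : ℝ) * (q * L) :=
      mul_le_mul_of_nonneg_left hS (Nat.cast_nonneg e)
    have hel : ((e * L : ℕ) : ℝ) ≤ (t : ℝ) := by
      exact_mod_cast (show e * L ≤ t by omega)
    have h2 : (e : ℝ) * (q * L) ≤ (t : ℝ) * q := by
      have : (e : ℝ) * (q * L) = q * ((e * L : ℕ) : ℝ) := by push_cast; ring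
      rw [this]
      calc q * ((e * L : ℕ) : ℝ) ≤ q * t := mul_le_mul_of_nonneg_left hel hq
        _ = (t : ℝ) * q := mul_comm _ _
    have h3 : (a : ℝ) * W + (r : ℝ) * W ≤ (n : ℝ) * W := by
      have hle : ((a + r : ℕ) : ℝ) ≤ (n : ℝ) := by exact_mod_cast (show a + r ≤ n by omega)
      have h := mul_le_mul_of_nonneg_right hle hWr
      push_cast at h
      linarith
    linarith

lemma delta_le {x : Fin n} {g : ℕ → Fin n} (hg : NatWalk E g) (h0 : g 0 = x) (t : ℕ) :
    sInf {c : ℕ | ∃ p : Fin (t + 1) → Fin n, IsWalk E p ∧ p 0 = x ∧ c = walkWeight w p}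
      ≤ ∑ k ∈ range t, w (g k) (g (k + 1)) := by
  apply Nat.sInf_le
  refine ⟨fun j => g j.1, fun i => ?_, by simpa using h0, ?_⟩
  · simpa using hg i.1
  · unfold walkWeight
    rw [← Fin.sum_univ_eq_sum_range (fun k => w (g k) (g (k + 1))) t]
    exact Finset.sum_congr rfl (fun i _ => by simp)

lemma init {x : Fin n} {T : ℕ} (p : Fin (T + 1) → Fin n) (hT : 0 < T)
    (hwp : IsWalk E p) (hcl : p (Fin.last T) = p 0)
    {s : ℕ} (r : Fin (s + 1) → Fin n) (hwr : IsWalk E r) (hr0 : r 0 = x)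
    (hrl : r (Fin.last s) = p 0) :
    ∃ g : ℕ → Fin n, NatWalk E g ∧ g 0 = x ∧ Per g s T ∧ win w g s T = walkWeight w p := by
  have hmlt : ∀ m : ℕ, m % T < T + 1 := fun m => lt_trans (Nat.mod_lt _ hT) (by omega)
  set pc : ℕ → Fin n := fun m => p ⟨m % T, hmlt m⟩ with hpc
  have pc_pair : ∀ m : ℕ, pc m = p (Fin.castSucc ⟨m % T, Nat.mod_lt m hT⟩)
      ∧ pc (m + 1) = p (Fin.succ ⟨m % T, Nat.mod_lt m hT⟩) := by
    intro m
    constructor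
    · exact congrArg p (Fin.ext (by simp))
    · by_cases hwrap : m % T + 1 = T
      · have hz : (m + 1) % T = 0 := by rw [mod_succ hT]; simp [hwrap]
        have h1 : (⟨(m + 1) % T, hmlt _⟩ : Fin (T + 1)) = 0 := Fin.ext (by simp [hz])
        have h2 : (Fin.succ (⟨m % T, Nat.mod_lt m hT⟩ : Fin T)) = Fin.last T :=
          Fin.ext (by simp [Fin.val_succ, hwrap])
        show p ⟨(m + 1) % T, hmlt _⟩ = _
        rw [h1, h2, hcl]
      · have hz : (m + 1) % T = m % T + 1 := by rw [mod_succ hT]; simp [hwrap]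
        exact congrArg p (Fin.ext (by simp [hz]))
  have pc_edge : ∀ m, E (pc m) (pc (m + 1)) := by
    intro m
    rw [(pc_pair m).1, (pc_pair m).2]
    exact hwp _
  have pc_per : ∀ m, pc (m + T) = pc m := fun m =>
    congrArg p (Fin.ext (by simp [Nat.add_mod_right]))
  have pc0 : pc 0 = p 0 := congrArg p (Fin.ext (by simp))
  refine ⟨fun k => if h : k < s then r ⟨k, by omega⟩ else pc (k - s), ?_, ?_, ?_, ?_⟩
  · intro k
    rcases lt_trichotomy (k + 1) s with h | h | h
    · simp only [dif_pos h, dif_pos (show k < s by omega)]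
      exact hwr ⟨k, by omega⟩
    · simp only [dif_pos (show k < s by omega), dif_neg (show ¬ k + 1 < s by omega)]
      rw [show k + 1 - s = 0 by omega, pc0, ← hrl,
        show Fin.last s = ⟨k + 1, by omega⟩ from Fin.ext (by simp; omega)]
      exact hwr ⟨k, by omega⟩
    · simp only [dif_neg (show ¬ k < s by omega), dif_neg (show ¬ k + 1 < s by omega)]
      rw [show k + 1 - s = (k - s) + 1 by omega]
      exact pc_edge _
  · by_cases h : 0 < s
    · simp only [dif_pos h]
      rw [show (⟨0, by omega⟩ : Fin (s + 1)) = 0 from Fin.ext (by simp), hr0]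
    · simp only [dif_neg (show ¬ (0:ℕ) < s by omega)]
      rw [show 0 - s = 0 by omega, pc0, ← hrl, ← hr0]
      congr 1
      exact Fin.ext (by simp; omega)
  · intro k hk
    simp only [dif_neg (show ¬ k + T < s by omega), dif_neg (show ¬ k < s by omega)]
    rw [show k + T - s = (k - s) + T by omega, pc_per]
  · have hgpc : ∀ m : ℕ, (fun k => if h : k < s then r ⟨k, by omega⟩ else pc (k - s)) (s + m) = pc m := by
      intro m
      simp only [dif_neg (show ¬ s + m < s by omega)]
      rw [show s + m - s = m by omega]
    calc win w (fun k => if h : k < s then r ⟨k, by omega⟩ else pc (k - s)) s T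
        = ∑ m ∈ range T, w (pc m) (pc (m + 1)) := by
          apply Finset.sum_congr rfl
          intro m _
          rw [hgpc m, show s + m + 1 = s + (m + 1) by ring, hgpc (m + 1)]
      _ = walkWeight w p := by
          unfold walkWeight
          rw [← Fin.sum_univ_eq_sum_range (fun m => w (pc m) (pc (m + 1))) T]
          apply Finset.sum_congr rfl
          intro i _
          rw [(pc_pair i.1).1, (pc_pair i.1).2]
          congr 2 <;> exact congrArg _ (Fin.ext (by simp [Nat.mod_eq_of_lt i.isLt]))

end aux

/-- For every vertex `x` and every integer `t ≥ 1`, the minimum weight of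
a path of length `t` starting at `x` satisfies `δ_t(x) ≤ t·μ(x) + n·W`, where `n` is the
number of vertices and `W` the maximum edge weight. -/
theorem delta_upper_bound {n : ℕ} (E : Fin n → Fin n → Prop)
    (w : Fin n → Fin n → ℕ) (hout : ∀ v : Fin n, ∃ u : Fin n, E v u)
    (W : ℕ) (hW : ∀ a b : Fin n, E a b → w a b ≤ W)
    (x : Fin n) (hcyc : (cycleMeans E w x).Nonempty) (t : ℕ) (ht : 1 ≤ t) :
    (deltaNat E w t x : ℝ) ≤ (t : ℝ) * mcm E w x + (n : ℝ) * (W : ℝ) := by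
  have ht0 : 0 < t := ht
  have ht' : (0 : ℝ) < t := by exact_mod_cast ht0
  have key : ∀ q ∈ cycleMeans E w x, (deltaNat E w t x : ℝ) ≤ (t : ℝ) * q + n * W := by
    intro q hq
    obtain ⟨T, p, hT, hwp, hcl, hreach, hqe⟩ := hq
    obtain ⟨s, r, hwr, hr0, hrl⟩ := hreach
    obtain ⟨g, hgw, hg0, hgper, hgwin⟩ := init p hT hwp hcl r hwr hr0 hrl
    have hq0 : 0 ≤ q := by rw [hqe]; positivity
    have hS : (win w g s T : ℝ) ≤ q * T := by
      rw [hgwin, hqe, div_mul_cancel₀ _ (by exact_mod_cast hT.ne' : (T : ℝ) ≠ 0)]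
    obtain ⟨L', a', g', hw', h0', hL', hper', hn', hwin'⟩ :=
      reduce q T s g hgw hg0 hT hgper hS
    have hWb : ∀ k, w (g' k) (g' (k + 1)) ≤ W := fun k => hW _ _ (hw' k)
    have hb := sum_bound (t := t) hper' hL' hn' hwin' hq0 hWb
    have hd0 : deltaNat E w t x ≤ ∑ k ∈ Finset.range t, w (g' k) (g' (k + 1)) :=
      delta_le hw' h0' t
    have hd : (deltaNat E w t x : ℝ)
        ≤ ((∑ k ∈ Finset.range t, w (g' k) (g' (k + 1)) : ℕ) : ℝ) := by exact_mod_cast hd0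
    linarith
  have hlow : ((deltaNat E w t x : ℝ) - n * W) / t ≤ mcm E w x := by
    apply le_csInf hcyc
    intro q hq
    rw [div_le_iff₀ ht']
    have h1 := key q hq
    have h2 : (t : ℝ) * q = q * t := mul_comm _ _
    linarith
  rw [div_le_iff₀ ht'] at hlow
  have h3 : mcm E w x * t = t * mcm E w x := mul_comm _ _
  linarith
end

section
/- For every vertex x from which at least one cycle is reachable, the sequence δ_t(x)/t converges to μ(x) as t → ∞. -/
open scoped ENNReal

set_option linter.unreachableTactic false
set_option linter.unnecessarySeqFocus false
set_option linter.unusedTactic false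

namespace DM

variable {n : ℕ} {E : Fin n → Fin n → Prop} {w : Fin n → Fin n → ℕ}

/-- ℕ-indexed walk of length `t`. -/
def NWalk (E : Fin n → Fin n → Prop) (t : ℕ) (f : ℕ → Fin n) : Prop :=
  ∀ k, k < t → E (f k) (f (k+1))

def nwt (w : Fin n → Fin n → ℕ) (t : ℕ) (f : ℕ → Fin n) : ℕ :=
  ∑ k ∈ Finset.range t, w (f k) (f (k+1))

lemma isWalk_ofN {t : ℕ} {f : ℕ → Fin n} (hf : NWalk E t f) :
    IsWalk E (fun k : Fin (t+1) => f k) := by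
  intro i
  simpa using hf i i.isLt

lemma walkWeight_ofN (w : Fin n → Fin n → ℕ) {t : ℕ} (f : ℕ → Fin n) :
    walkWeight w (fun k : Fin (t+1) => f k) = nwt w t f := by
  unfold walkWeight nwt
  rw [← Fin.sum_univ_eq_sum_range (fun k => w (f k) (f (k+1))) t]
  simp

lemma toN {t : ℕ} {p : Fin (t+1) → Fin n} (hp : IsWalk E p) :
    ∃ f : ℕ → Fin n, NWalk E t f ∧ f 0 = p 0 ∧ f t = p (Fin.last t) ∧
      nwt w t f = walkWeight w p := by
  refine ⟨fun k => p ⟨min k t, by omega⟩, ?_, ?_, ?_, ?_⟩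
  · intro k hk
    have h1 : (⟨min k t, by omega⟩ : Fin (t+1)) = (⟨k, hk⟩ : Fin t).castSucc :=
      Fin.ext (by simp <;> omega)
    have h2 : (⟨min (k+1) t, by omega⟩ : Fin (t+1)) = (⟨k, hk⟩ : Fin t).succ :=
      Fin.ext (by simp <;> omega)
    show E (p ⟨min k t, by omega⟩) (p ⟨min (k+1) t, by omega⟩)
    rw [h1, h2]; exact hp _
  · exact congrArg p (Fin.ext (by simp))
  · exact congrArg p (Fin.ext (by simp [Fin.last]))
  · unfold walkWeight nwt
    rw [← Fin.sum_univ_eq_sum_range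
      (fun k => w (p ⟨min k t, by omega⟩) (p ⟨min (k+1) t, by omega⟩)) t]
    refine Finset.sum_congr rfl fun i _ => ?_
    have h1 : (⟨min (i:ℕ) t, by omega⟩ : Fin (t+1)) = i.castSucc :=
      Fin.ext (by have := i.isLt; simp <;> omega)
    have h2 : (⟨min ((i:ℕ)+1) t, by omega⟩ : Fin (t+1)) = i.succ :=
      Fin.ext (by have := i.isLt; simp <;> omega)
    rw [h1, h2]

section layer2
variable {n : ℕ} {E : Fin n → Fin n → Prop} {w : Fin n → Fin n → ℕ} {x : Fin n}

lemma exists_inf_walk (hout : ∀ v : Fin n, ∃ u : Fin n, E v u) (x : Fin n) :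
    ∃ f : ℕ → Fin n, f 0 = x ∧ ∀ k, E (f k) (f (k+1)) := by
  choose g hg using hout
  refine ⟨fun k => g^[k] x, rfl, fun k => ?_⟩
  show E (g^[k] x) (g^[k+1] x)
  rw [Function.iterate_succ_apply']
  exact hg _

lemma delta_le {t : ℕ} {f : ℕ → Fin n} (hf : NWalk E t f) (h0 : f 0 = x) :
    deltaNat E w t x ≤ nwt w t f := by
  apply Nat.sInf_le
  refine ⟨fun k : Fin (t+1) => f k, isWalk_ofN hf, ?_, (walkWeight_ofN w f).symm⟩
  simpa using h0

lemma delta_mem (hout : ∀ v : Fin n, ∃ u : Fin n, E v u) (t : ℕ) (x : Fin n) :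
    ∃ f : ℕ → Fin n, NWalk E t f ∧ f 0 = x ∧ deltaNat E w t x = nwt w t f := by
  obtain ⟨g, hg0, hg⟩ := exists_inf_walk hout x
  have hne : {c : ℕ | ∃ p : Fin (t + 1) → Fin n, IsWalk E p ∧ p 0 = x ∧
      c = walkWeight w p}.Nonempty := by
    refine ⟨walkWeight w (fun k : Fin (t+1) => g k), fun k : Fin (t+1) => g k,
      isWalk_ofN (fun k _ => hg k), ?_, rfl⟩
    simpa using hg0
  obtain ⟨p, hp, hp0, hc⟩ := Nat.sInf_mem hne
  obtain ⟨f, hf, hf0, -, hfw⟩ := toN (w := w) hp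
  exact ⟨f, hf, hf0.trans hp0, by rw [deltaNat, hc, ← hfw]⟩

lemma reachable_of_nwalk {t : ℕ} {f : ℕ → Fin n} (hf : NWalk E t f) (h0 : f 0 = x) :
    Reachable E x (f t) := by
  refine ⟨t, fun k : Fin (t+1) => f k, isWalk_ofN hf, by simpa using h0, by simp⟩

lemma cycleMeans_nonneg : ∀ q ∈ cycleMeans E w x, 0 ≤ q := by
  rintro q ⟨t, p, ht, -, -, -, rfl⟩
  positivity

lemma cycleMeans_bdd : BddBelow (cycleMeans E w x) :=
  ⟨0, fun q hq => cycleMeans_nonneg q hq⟩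

lemma mcm_nonneg : 0 ≤ mcm E w x := Real.sInf_nonneg cycleMeans_nonneg

lemma mcm_le_mean {ℓ : ℕ} {f : ℕ → Fin n} (hf : NWalk E ℓ f) (hl : 0 < ℓ)
    (hcy : f ℓ = f 0) (hr : Reachable E x (f 0)) :
    mcm E w x * ℓ ≤ nwt w ℓ f := by
  have hmem : ((nwt w ℓ f : ℝ) / ℓ) ∈ cycleMeans E w x := by
    refine ⟨ℓ, fun k : Fin (ℓ+1) => f k, hl, isWalk_ofN hf, by simpa using hcy,
      by simpa using hr, by rw [walkWeight_ofN]⟩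
  have := csInf_le cycleMeans_bdd hmem
  rw [mcm]
  calc sInf (cycleMeans E w x) * ℓ ≤ (nwt w ℓ f : ℝ) / ℓ * ℓ := by
        apply mul_le_mul_of_nonneg_right this (by positivity)
    _ = nwt w ℓ f := by field_simp


lemma nwt_split (w : Fin n → Fin n → ℕ) (a b : ℕ) (f : ℕ → Fin n) :
    nwt w (a+b) f = nwt w a f + ∑ k ∈ Finset.range b, w (f (a+k)) (f (a+k+1)) := by
  rw [nwt, nwt]; exact Finset.sum_range_add _ a b

lemma lower_bound : ∀ t : ℕ, ∀ f : ℕ → Fin n, NWalk E t f → f 0 = x →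
    mcm E w x * t ≤ (nwt w t f : ℝ) + mcm E w x * ((n-1 : ℕ) : ℝ) := by
  intro t
  induction t using Nat.strong_induction_on with
  | _ t IH =>
    intro f hf h0
    by_cases htn : t < n
    · have h1 : (t:ℝ) ≤ ((n-1:ℕ):ℝ) := by exact_mod_cast Nat.le_sub_one_of_lt htn
      calc mcm E w x * t ≤ mcm E w x * ((n-1:ℕ):ℝ) :=
            mul_le_mul_of_nonneg_left h1 mcm_nonneg
        _ ≤ (nwt w t f : ℝ) + mcm E w x * ((n-1:ℕ):ℝ) :=
            le_add_of_nonneg_left (by positivity)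
    · push_neg at htn
      obtain ⟨a, b, hab, heq⟩ := Fintype.exists_ne_map_eq_of_card_lt
        (fun k : Fin (n+1) => f k) (by simp)
      obtain ⟨i, j, hij, hjn, hfij⟩ : ∃ i j : ℕ, i < j ∧ j ≤ n ∧ f i = f j := by
        rcases lt_or_gt_of_ne hab with h | h
        · exact ⟨a, b, h, Nat.lt_succ_iff.mp b.isLt, heq⟩
        · exact ⟨b, a, h, Nat.lt_succ_iff.mp a.isLt, heq.symm⟩
      set d := j - i with hd
      have hd0 : 0 < d := by omega
      have hdt : d ≤ t := by omega
      -- the extracted cycle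
      have hcy : mcm E w x * d ≤ (nwt w d (fun m => f (i + m)) : ℝ) := by
        apply mcm_le_mean
        · intro k hk
          show E (f (i+k)) (f (i+(k+1)))
          have e : i + (k+1) = (i+k)+1 := by omega
          rw [e]
          exact hf (i+k) (by omega)
        · exact hd0
        · show f (i+d) = f (i+0)
          have e : i + d = j := by omega
          rw [e, Nat.add_zero]
          exact hfij.symm
        · show Reachable E x (f (i+0))
          rw [Nat.add_zero]
          exact reachable_of_nwalk (fun k hk => hf k (by omega)) h0
      -- the spliced walk
      set s : ℕ → Fin n := fun m => if m < i then f m else f (m + d) with hs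
      have hs1 : ∀ m, m ≤ i → s m = f m := by
        intro m hm
        rcases lt_or_eq_of_le hm with h | h
        · simp [hs, h]
        · rw [h]
          have e0 : s i = f (i + d) := by simp [hs]
          rw [e0, show i + d = j from by omega]
          exact hfij.symm
      have hs2 : ∀ m, i ≤ m → s m = f (m + d) := by
        intro m hm
        simp [hs, Nat.not_lt.mpr hm]
      have hsw : NWalk E (t - d) s := by
        intro k hk
        by_cases hki : k < i
        · rw [hs1 k hki.le, hs1 (k+1) hki]
          exact hf k (by omega)
        · push_neg at hki
          rw [hs2 k hki, hs2 (k+1) (by omega)]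
          have e : k+1+d = (k+d)+1 := by omega
          rw [e]
          exact hf (k+d) (by omega)
      have hs0 : s 0 = x := by rw [hs1 0 (Nat.zero_le i), h0]
      -- weight decomposition
      have key : nwt w t f = nwt w (t-d) s + nwt w d (fun m => f (i+m)) := by
        have e1 : nwt w t f = nwt w (i + (d + (t-j))) f := by
          congr 1; omega
        have e2 : nwt w (t-d) s = nwt w (i + (t-j)) s := by
          congr 1; omega
        rw [e1, e2, nwt_split, nwt_split]
        rw [show (∑ k ∈ Finset.range (d + (t-j)), w (f (i+k)) (f (i+k+1)))
            = (∑ k ∈ Finset.range d, w (f (i+k)) (f (i+k+1)))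
              + ∑ k ∈ Finset.range (t-j), w (f (i+(d+k))) (f (i+(d+k)+1))
          from Finset.sum_range_add _ d (t-j)]
        have eA : nwt w i s = nwt w i f := by
          rw [nwt, nwt]
          refine Finset.sum_congr rfl fun k hk => ?_
          have hk' : k < i := Finset.mem_range.mp hk
          rw [hs1 k hk'.le, hs1 (k+1) hk']
        have eB : (∑ k ∈ Finset.range (t-j), w (s (i+k)) (s (i+k+1)))
            = ∑ k ∈ Finset.range (t-j), w (f (i+(d+k))) (f (i+(d+k)+1)) := by
          refine Finset.sum_congr rfl fun k hk => ?_
          rw [hs2 (i+k) (by omega), hs2 (i+k+1) (by omega)]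
          have e3 : i+k+d = i+(d+k) := by omega
          have e4 : i+k+1+d = i+(d+k)+1 := by omega
          rw [e3, e4]
        have eC : nwt w d (fun m => f (i+m))
            = ∑ k ∈ Finset.range d, w (f (i+k)) (f (i+k+1)) := by
          rw [nwt]
          refine Finset.sum_congr rfl fun k hk => ?_
          show w (f (i+k)) (f (i+(k+1))) = _
          have e : i+(k+1) = i+k+1 := by omega
          rw [e]
        rw [eA, eB, eC]
        ring
      -- combine
      have IH' := IH (t-d) (by omega) s hsw hs0
      have hts : ((t - d : ℕ) : ℝ) = (t:ℝ) - (d:ℝ) := by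
        push_cast [Nat.cast_sub hdt]; ring
      rw [hts, mul_sub] at IH'
      have keyR : (nwt w t f : ℝ)
          = (nwt w (t-d) s : ℝ) + (nwt w d (fun m => f (i+m)) : ℝ) := by
        exact_mod_cast congrArg (Nat.cast : ℕ → ℝ) key
      linarith


lemma nwt_mono {f : ℕ → Fin n} {t t' : ℕ} (h : t ≤ t') : nwt w t f ≤ nwt w t' f :=
  Finset.sum_le_sum_of_subset (Finset.range_subset_range.mpr h)

lemma upper_bound {q : ℝ} (hq : q ∈ cycleMeans E w x) :
    ∃ C : ℝ, ∀ t : ℕ, (deltaNat E w t x : ℝ) ≤ q * t + C := by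
  have hq0 : 0 ≤ q := cycleMeans_nonneg q hq
  obtain ⟨t₀, p, ht₀, hp, hplast, hreach, hqe⟩ := hq
  obtain ⟨a, r, hr, hr0, hrlast⟩ := hreach
  obtain ⟨pc, hpcW, hpc0, hpct, hpcw⟩ := toN (w := w) hp
  obtain ⟨rr, hrrW, hrr0, hrra, hrrw⟩ := toN (w := w) hr
  -- pc : cycle as ℕ-walk; pc t₀ = pc 0
  have hc0 : pc 0 = pc t₀ := by rw [hpc0, hpct, hplast]
  -- infinite periodic extension
  set c : ℕ → Fin n := fun m => pc (m % t₀) with hcdef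
  have hcval : ∀ m, m ≤ t₀ → c m = pc m := by
    intro m hm
    rcases eq_or_lt_of_le hm with h | h
    · rw [h]; show pc (t₀ % t₀) = pc t₀; rw [Nat.mod_self]; exact hc0
    · show pc (m % t₀) = pc m; rw [Nat.mod_eq_of_lt h]
  have hperN : ∀ K m, c (m + K * t₀) = c m := by
    intro K m
    show pc ((m + K * t₀) % t₀) = pc (m % t₀)
    rw [Nat.add_mul_mod_self_right]
  have hcE : ∀ m, E (c m) (c (m+1)) := by
    intro m
    induction m using Nat.strong_induction_on with
    | _ m IH =>
      by_cases hm : m < t₀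
      · rw [hcval m hm.le, hcval (m+1) hm]
        exact hpcW m hm
      · push_neg at hm
        have e1 : c m = c (m - t₀) := by
          rw [← hperN 1 (m - t₀), one_mul, Nat.sub_add_cancel hm]
        have e2 : c (m+1) = c ((m - t₀)+1) := by
          rw [← hperN 1 (m - t₀ + 1), one_mul, show m - t₀ + 1 + t₀ = m + 1 from by omega]
        rw [e1, e2]
        exact IH (m - t₀) (by omega)
  -- cycle weight
  set Wc : ℕ := nwt w t₀ pc with hWcdef
  have hcWc : nwt w t₀ c = Wc := by
    rw [nwt, hWcdef, nwt]
    refine Finset.sum_congr rfl fun k hk => ?_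
    have hk' : k < t₀ := Finset.mem_range.mp hk
    rw [hcval k hk'.le, hcval (k+1) hk']
  have hqWc : q = (Wc : ℝ) / t₀ := by rw [hqe, hpcw]
  have hKsum : ∀ K : ℕ, nwt w (K * t₀) c = K * Wc := by
    intro K
    induction K with
    | zero => simp [nwt]
    | succ K IHK =>
      have e : (K+1) * t₀ = K * t₀ + t₀ := by ring
      rw [e, nwt_split, IHK]
      have : (∑ k ∈ Finset.range t₀, w (c (K * t₀ + k)) (c (K * t₀ + k + 1))) = Wc := by
        rw [← hcWc, nwt]
        refine Finset.sum_congr rfl fun k hk => ?_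
        have e1 : c (K * t₀ + k) = c k := by
          rw [show K * t₀ + k = k + K * t₀ from by ring, hperN]
        have e2 : c (K * t₀ + k + 1) = c (k + 1) := by
          rw [show K * t₀ + k + 1 = (k + 1) + K * t₀ from by ring, hperN]
        rw [e1, e2]
      rw [this]; ring
  -- the full walk from x
  set F : ℕ → Fin n := fun k => if k < a then rr k else c (k - a) with hFdef
  have hF1 : ∀ k, k ≤ a → F k = rr k := by
    intro k hk
    rcases eq_or_lt_of_le hk with h | h
    · rw [h]
      have : F a = c 0 := by simp [hFdef]
      rw [this, hcval 0 (Nat.zero_le _), hpc0, hrra, hrlast]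
    · simp [hFdef, h]
  have hF2 : ∀ k, a ≤ k → F k = c (k - a) := by
    intro k hk
    simp [hFdef, Nat.not_lt.mpr hk]
  have hFW : ∀ t, NWalk E t F := by
    intro t k _
    by_cases hk : k < a
    · rw [hF1 k hk.le, hF1 (k+1) hk]
      exact hrrW k hk
    · push_neg at hk
      rw [hF2 k hk, hF2 (k+1) (by omega), show k + 1 - a = (k - a) + 1 from by omega]
      exact hcE _
  have hF0 : F 0 = x := by rw [hF1 0 (Nat.zero_le _), hrr0, hr0]
  set R : ℕ := nwt w a rr with hRdef
  have hFa : nwt w a F = R := by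
    rw [nwt, hRdef, nwt]
    refine Finset.sum_congr rfl fun k hk => ?_
    have hk' : k < a := Finset.mem_range.mp hk
    rw [hF1 k hk'.le, hF1 (k+1) hk']
  refine ⟨(R : ℝ) + Wc, fun t => ?_⟩
  have hdle : deltaNat E w t x ≤ nwt w t F := delta_le (hFW t) hF0
  by_cases hta : t ≤ a
  · have h1 : (deltaNat E w t x : ℝ) ≤ R := by
      exact_mod_cast hdle.trans ((nwt_mono hta).trans_eq hFa)
    have : 0 ≤ q * t := by positivity
    linarith
  · push_neg at hta
    set M : ℕ := t - a with hMdef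
    have hnat : nwt w t F ≤ R + (M / t₀ + 1) * Wc := by
      have e : nwt w t F = nwt w (a + M) F := by congr 1; omega
      rw [e, nwt_split, hFa]
      have e2 : (∑ k ∈ Finset.range M, w (F (a + k)) (F (a + k + 1)))
          = nwt w M c := by
        rw [nwt]
        refine Finset.sum_congr rfl fun k hk => ?_
        rw [hF2 (a+k) (by omega), hF2 (a+k+1) (by omega),
          show a + k - a = k from by omega, show a + k + 1 - a = k + 1 from by omega]
      rw [e2]
      have hMle : M ≤ (M / t₀ + 1) * t₀ := by
        have h1 := Nat.div_add_mod M t₀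
        have h2 : M % t₀ < t₀ := Nat.mod_lt _ ht₀
        have h3 : (M / t₀ + 1) * t₀ = t₀ * (M / t₀) + t₀ := by ring
        omega
      have hfin := (nwt_mono (w := w) (f := c) hMle).trans_eq (hKsum (M / t₀ + 1))
      exact Nat.add_le_add_left hfin R
    have hcast : (deltaNat E w t x : ℝ) ≤ (R : ℝ) + (((M / t₀ : ℕ) : ℝ) + 1) * Wc := by
      have := hdle.trans hnat
      exact_mod_cast this
    have hdiv : ((M / t₀ : ℕ) : ℝ) ≤ (M : ℝ) / t₀ := Nat.cast_div_le
    have hWc0 : (0:ℝ) ≤ Wc := Nat.cast_nonneg _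
    have h2 : (((M / t₀ : ℕ) : ℝ) + 1) * Wc ≤ ((M : ℝ) / t₀ + 1) * Wc := by
      apply mul_le_mul_of_nonneg_right _ hWc0
      linarith
    have h3 : ((M : ℝ) / t₀ + 1) * Wc = (M : ℝ) * q + Wc := by
      rw [hqWc]; field_simp
    have h4 : (M : ℝ) * q ≤ (t : ℝ) * q := by
      apply mul_le_mul_of_nonneg_right _ hq0
      exact_mod_cast Nat.sub_le t a
    linarith

end layer2
end DM

/-- For every vertex `x` from which at least one cycle is reachable, the
sequence `δ_t(x)/t` converges to `μ(x)` as `t → ∞`. -/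
theorem delta_div_tendsto_mcm {n : ℕ} (E : Fin n → Fin n → Prop)
    (w : Fin n → Fin n → ℕ) (hout : ∀ v : Fin n, ∃ u : Fin n, E v u)
    (x : Fin n) (hcyc : (cycleMeans E w x).Nonempty) :
    Filter.Tendsto (fun t : ℕ => (deltaNat E w t x : ℝ) / (t : ℝ))
      Filter.atTop (nhds (mcm E w x)) := by
  rw [Metric.tendsto_atTop]
  intro ε hε
  obtain ⟨q, hqmem, hqlt⟩ := Real.lt_sInf_add_pos hcyc (half_pos hε)
  obtain ⟨C, hC⟩ := DM.upper_bound hqmem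
  have t1 : Filter.Tendsto (fun t : ℕ => C / (t:ℝ)) Filter.atTop (nhds 0) :=
    tendsto_const_div_atTop_nhds_zero_nat C
  have t2 : Filter.Tendsto (fun t : ℕ => mcm E w x * ((n-1:ℕ):ℝ) / (t:ℝ))
      Filter.atTop (nhds 0) := tendsto_const_div_atTop_nhds_zero_nat _
  have e1 := t1.eventually_lt_const (half_pos hε)
  have e2 := t2.eventually_lt_const hε
  have e3 : ∀ᶠ t : ℕ in Filter.atTop, 1 ≤ t := Filter.eventually_ge_atTop 1
  obtain ⟨N, hN⟩ := Filter.eventually_atTop.mp ((e1.and e2).and e3)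
  refine ⟨N, fun t ht => ?_⟩
  obtain ⟨⟨he1, he2⟩, he3⟩ := hN t ht
  have ht0 : (0:ℝ) < t := by exact_mod_cast he3
  rw [Real.dist_eq, abs_sub_lt_iff]
  constructor
  · -- upper
    have h5 : (deltaNat E w t x : ℝ) / t ≤ (q * t + C) / t := by
      have h0 : (0:ℝ) ≤ q * t + C - deltaNat E w t x := by linarith [hC t]
      gcongr
      linarith [hC t]
    have h6 : (q * t + C) / t = q + C / t := by field_simp
    rw [h6] at h5
    have hmcm : q < mcm E w x + ε / 2 := hqlt
    linarith
  · -- lower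
    obtain ⟨f, hf, hf0, hfd⟩ := DM.delta_mem (w := w) hout t x
    have hlb := DM.lower_bound (w := w) t f hf hf0
    rw [← hfd] at hlb
    have h7 : mcm E w x ≤ ((deltaNat E w t x : ℝ)
        + mcm E w x * ((n-1:ℕ):ℝ)) / t := by
      rw [le_div_iff₀ ht0]
      linarith
    rw [add_div] at h7
    linarith
end

section
/- For every cycle C in a finite directed graph there exists a simple cycle (a cycle visiting no vertex twice except the start/end vertex) consisting of edges of C whose mean weight is at most the mean weight of C. Consequently, the minimum cycle mean over all cycles reachable from a vertex x is attained by a simple cycle of length at most n. -/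
open scoped ENNReal

namespace SCMaux

variable {n : ℕ} {E : Fin n → Fin n → Prop} {w : Fin n → Fin n → ℕ}

/-- Walk as a function on ℕ. -/
def NatWalk (E : Fin n → Fin n → Prop) (P : ℕ → Fin n) (t : ℕ) : Prop :=
  ∀ k, k < t → E (P k) (P (k + 1))

def natWeight (w : Fin n → Fin n → ℕ) (P : ℕ → Fin n) (t : ℕ) : ℕ :=
  ∑ k ∈ Finset.range t, w (P k) (P (k + 1))

def toFin (P : ℕ → Fin n) (t : ℕ) : Fin (t + 1) → Fin n := fun i => P i

lemma isWalk_toFin {P : ℕ → Fin n} {t : ℕ} (h : NatWalk E P t) : IsWalk E (toFin P t) := by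
  intro i
  have := h i i.isLt
  simpa [toFin, Fin.coe_castSucc, Fin.val_succ] using this

lemma walkWeight_toFin (w : Fin n → Fin n → ℕ) (P : ℕ → Fin n) (t : ℕ) :
    walkWeight w (toFin P t) = natWeight w P t := by
  rw [walkWeight, natWeight, ← Fin.sum_univ_eq_sum_range (fun k => w (P k) (P (k + 1))) t]
  rfl

def ofFin {t : ℕ} (p : Fin (t + 1) → Fin n) : ℕ → Fin n :=
  fun k => p ⟨min k t, by omega⟩

lemma ofFin_eq {t : ℕ} (p : Fin (t + 1) → Fin n) {k : ℕ} (h : k ≤ t) :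
    ofFin p k = p ⟨k, by omega⟩ := by
  simp [ofFin, min_eq_left h]

lemma natWalk_ofFin {t : ℕ} {p : Fin (t + 1) → Fin n} (h : IsWalk E p) :
    NatWalk E (ofFin p) t := by
  intro k hk
  rw [ofFin_eq p (by omega), ofFin_eq p (by omega)]
  have := h ⟨k, hk⟩
  convert this using 2 <;> exact (Fin.ext rfl : _)

lemma natWeight_ofFin {t : ℕ} (w : Fin n → Fin n → ℕ) (p : Fin (t + 1) → Fin n) :
    natWeight w (ofFin p) t = walkWeight w p := by
  rw [walkWeight, natWeight, ← Fin.sum_univ_eq_sum_range]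
  apply Finset.sum_congr rfl
  intro i _
  rw [ofFin_eq p (by omega), ofFin_eq p (by omega)]
  congr 1 <;> exact congrArg p (Fin.ext (by simp))

lemma mean_two {W1 W2 t1 t2 : ℕ} (h1 : 0 < t1) (h2 : 0 < t2) :
    ((W1 : ℝ) / t1 ≤ ((W1 : ℝ) + W2) / (t1 + t2)) ∨
      ((W2 : ℝ) / t2 ≤ ((W1 : ℝ) + W2) / (t1 + t2)) := by
  by_contra hc
  push_neg at hc
  obtain ⟨ha, hb⟩ := hc
  have ht1 : (0 : ℝ) < t1 := by exact_mod_cast h1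
  have ht2 : (0 : ℝ) < t2 := by exact_mod_cast h2
  rw [div_lt_div_iff₀ (by positivity) ht1] at ha
  rw [div_lt_div_iff₀ (by positivity) ht2] at hb
  nlinarith

lemma extract (E : Fin n → Fin n → Prop) (w : Fin n → Fin n → ℕ) :
    ∀ t, ∀ P : ℕ → Fin n, 0 < t → NatWalk E P t → P t = P 0 →
    ∃ s Q, 0 < s ∧ NatWalk E Q s ∧ Q s = Q 0 ∧
      (∀ i j, i < s → j < s → Q i = Q j → i = j) ∧
      (∀ i, i < s → ∃ j, j < t ∧ Q i = P j ∧ Q (i + 1) = P (j + 1)) ∧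
      (natWeight w Q s : ℝ) / s ≤ (natWeight w P t : ℝ) / t := by
  intro t
  induction t using Nat.strong_induction_on with
  | _ t IH =>
  intro P ht hW hc
  by_cases hinj : ∀ i j, i < t → j < t → P i = P j → i = j
  · exact ⟨t, P, ht, hW, hc, hinj, fun i hi => ⟨i, hi, rfl, rfl⟩, le_refl _⟩
  push_neg at hinj
  obtain ⟨i, j, hij, hjt, hPij⟩ : ∃ i j, i < j ∧ j < t ∧ P i = P j := by
    obtain ⟨a, b, ha, hb, hab, hne⟩ := hinj
    rcases lt_or_gt_of_ne hne with h | h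
    · exact ⟨a, b, h, hb, hab⟩
    · exact ⟨b, a, h, ha, hab.symm⟩
  set d := j - i with hd
  have hd0 : 0 < d := by omega
  have hdt : d < t := by omega
  have hid : i + d = j := by omega
  -- inner cycle
  set P1 : ℕ → Fin n := fun k => P (i + k) with hP1
  -- outer cycle
  set P2 : ℕ → Fin n := fun k => if k ≤ i then P k else P (k + d) with hP2
  have hW1 : NatWalk E P1 d := by
    intro k hk
    have : E (P (i + k)) (P (i + k + 1)) := hW (i + k) (by omega)
    simpa [hP1, Nat.add_assoc] using this
  have hc1 : P1 d = P1 0 := by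
    simp only [hP1, hid, Nat.add_zero]
    exact hPij.symm
  have hW2 : NatWalk E P2 (t - d) := by
    intro k hk
    rcases lt_trichotomy k i with h | h | h
    · have e1 : P2 k = P k := by simp [hP2, le_of_lt h]
      have e2 : P2 (k + 1) = P (k + 1) := by simp [hP2, Nat.succ_le_of_lt h]
      rw [e1, e2]; exact hW k (by omega)
    · subst h
      have e1 : P2 k = P j := by simp [hP2, hPij]
      have e2 : P2 (k + 1) = P (j + 1) := by
        have : ¬ k + 1 ≤ k := by omega
        simp [hP2, this, hid]
        congr 1
        omega
      rw [e1, e2]; exact hW j hjt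
    · have e1 : P2 k = P (k + d) := by simp [hP2, Nat.not_le.mpr h]
      have e2 : P2 (k + 1) = P (k + d + 1) := by
        have : ¬ k + 1 ≤ i := by omega
        simp [hP2, this]
        congr 1
        omega
      rw [e1, e2]; exact hW (k + d) (by omega)
  have hc2 : P2 (t - d) = P2 0 := by
    have h1 : ¬ t - d ≤ i := by omega
    have h2 : t - d + d = t := by omega
    simp [hP2, h1, h2, hc]
  -- weight decomposition
  have hsplit : natWeight w P t = natWeight w P1 d + natWeight w P2 (t - d) := by
    have ht' : t = i + (d + (t - j)) := by omega
    have htd : t - d = i + (t - j) := by omega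
    rw [natWeight]
    conv_lhs => rw [ht']
    rw [Finset.sum_range_add, Finset.sum_range_add]
    have hA : natWeight w P1 d = ∑ k ∈ Finset.range d, w (P (i + k)) (P (i + k + 1)) := by
      apply Finset.sum_congr rfl
      intro k _
      simp [hP1, Nat.add_assoc]
    have hB : natWeight w P2 (t - d) =
        (∑ k ∈ Finset.range i, w (P k) (P (k + 1))) +
          ∑ k ∈ Finset.range (t - j), w (P (j + k)) (P (j + k + 1)) := by
      rw [natWeight, htd, Finset.sum_range_add]
      congr 1
      · apply Finset.sum_congr rfl
        intro k hk
        rw [Finset.mem_range] at hk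
        have e1 : P2 k = P k := by simp [hP2, Nat.le_of_lt hk]
        have e2 : P2 (k + 1) = P (k + 1) := by simp [hP2, Nat.succ_le_of_lt hk]
        rw [e1, e2]
      · apply Finset.sum_congr rfl
        intro k hk
        have e2 : P2 (i + k + 1) = P (j + k + 1) := by
          have h1 : ¬ i + k + 1 ≤ i := by omega
          simp [hP2, h1]
          congr 1
          omega
        rcases Nat.eq_or_lt_of_le (Nat.zero_le k) with h0 | h0
        · have e1 : P2 (i + k) = P (j + k) := by
            simp [hP2, ← h0, hPij]
          rw [e1, e2]
        · have e1 : P2 (i + k) = P (j + k) := by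
            have h1 : ¬ i + k ≤ i := by omega
            simp [hP2, h1]
            congr 1
            omega
          rw [e1, e2]
    rw [hA, hB]
    have hC : ∀ k ∈ Finset.range (t - j), w (P (i + (d + k))) (P (i + (d + k) + 1)) =
        w (P (j + k)) (P (j + k + 1)) := by
      intro k _
      congr 2 <;> omega
    rw [Finset.sum_congr rfl hC]
    ring
  -- apply IH to the better sub-cycle
  have htd0 : 0 < t - d := by omega
  have hmean := mean_two (W1 := natWeight w P1 d) (W2 := natWeight w P2 (t - d)) hd0 htd0
  have hcast : ((natWeight w P1 d : ℝ) + (natWeight w P2 (t - d) : ℝ)) = (natWeight w P t : ℝ) := by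
    rw [hsplit]; push_cast; ring
  have hcast2 : ((d : ℝ) + ((t - d : ℕ) : ℝ)) = (t : ℝ) := by
    have : d + (t - d) = t := by omega
    exact_mod_cast congrArg (Nat.cast : ℕ → ℝ) this
  rcases hmean with hm | hm
  · rw [hcast, hcast2] at hm
    obtain ⟨s, Q, hs, hQW, hQc, hQinj, hQsub, hQle⟩ := IH d hdt P1 hd0 hW1 hc1
    refine ⟨s, Q, hs, hQW, hQc, hQinj, ?_, hQle.trans hm⟩
    intro k hk
    obtain ⟨m, hm', e1, e2⟩ := hQsub k hk
    exact ⟨i + m, by omega, by simpa [hP1] using e1, by simpa [hP1, Nat.add_assoc] using e2⟩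
  · rw [hcast, hcast2] at hm
    obtain ⟨s, Q, hs, hQW, hQc, hQinj, hQsub, hQle⟩ := IH (t - d) (by omega) P2 (by omega) hW2 hc2
    refine ⟨s, Q, hs, hQW, hQc, hQinj, ?_, hQle.trans hm⟩
    intro k hk
    obtain ⟨m, hm', e1, e2⟩ := hQsub k hk
    rcases lt_trichotomy m i with h | h | h
    · refine ⟨m, by omega, ?_, ?_⟩
      · rw [e1]; simp [hP2, Nat.le_of_lt h]
      · rw [e2]; simp [hP2, Nat.succ_le_of_lt h]
    · subst h
      refine ⟨j, hjt, ?_, ?_⟩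
      · rw [e1]; simp [hP2, hPij]
      · rw [e2]
        have h1 : ¬ m + 1 ≤ m := by omega
        simp [hP2, h1]
        congr 1
        omega
    · refine ⟨m + d, by omega, ?_, ?_⟩
      · rw [e1]; simp [hP2, Nat.not_le.mpr h]
      · rw [e2]
        have h1 : ¬ m + 1 ≤ i := by omega
        simp [hP2, h1]
        congr 1
        omega

end SCMaux

namespace SCMaux2
open SCMaux
variable {n : ℕ} {E : Fin n → Fin n → Prop} {w : Fin n → Fin n → ℕ}

lemma reachable_of_nat {t : ℕ} {P : ℕ → Fin n} (h : NatWalk E P t) :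
    Reachable E (P 0) (P t) := by
  refine ⟨t, toFin P t, isWalk_toFin h, ?_, ?_⟩ <;> rfl

lemma nat_of_reachable {x y : Fin n} (h : Reachable E x y) :
    ∃ t P, NatWalk E P t ∧ P 0 = x ∧ P t = y := by
  obtain ⟨t, p, hp, h0, hl⟩ := h
  refine ⟨t, ofFin p, natWalk_ofFin hp, ?_, ?_⟩
  · rw [ofFin_eq p (Nat.zero_le t)]
    rw [← h0]
    congr 1
  · rw [ofFin_eq p (le_refl t)]
    rw [← hl]
    congr 1

lemma reachable_trans {x y z : Fin n} (h1 : Reachable E x y) (h2 : Reachable E y z) :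
    Reachable E x z := by
  obtain ⟨a, P1, hW1, h10, h1l⟩ := nat_of_reachable h1
  obtain ⟨b, P2, hW2, h20, h2l⟩ := nat_of_reachable h2
  set P : ℕ → Fin n := fun k => if k ≤ a then P1 k else P2 (k - a) with hP
  have hmatch : P1 a = P2 0 := by rw [h1l, h20]
  have hW : NatWalk E P (a + b) := by
    intro k hk
    rcases lt_trichotomy k a with h | h | h
    · have e1 : P k = P1 k := by simp [hP, Nat.le_of_lt h]
      have e2 : P (k + 1) = P1 (k + 1) := by simp [hP, Nat.succ_le_of_lt h]
      rw [e1, e2]; exact hW1 k h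
    · subst h
      have e1 : P k = P2 0 := by simp [hP, hmatch]
      have e2 : P (k + 1) = P2 1 := by
        have h1 : ¬ k + 1 ≤ k := by omega
        simp [hP, h1]
      rw [e1, e2]; exact hW2 0 (by omega)
    · have e1 : P k = P2 (k - a) := by simp [hP, Nat.not_le.mpr h]
      have e2 : P (k + 1) = P2 (k - a + 1) := by
        have h1 : ¬ k + 1 ≤ a := by omega
        have h2 : k + 1 - a = k - a + 1 := by omega
        simp [hP, h1, h2]
      rw [e1, e2]; exact hW2 (k - a) (by omega)
  have h0 : P 0 = x := by simp [hP, h10]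
  have hl : P (a + b) = z := by
    rcases Nat.eq_zero_or_pos b with hb | hb
    · subst hb
      have : P (a + 0) = P1 a := by simp [hP]
      rw [this, hmatch, h2l]
    · have h1 : ¬ a + b ≤ a := by omega
      have h2 : a + b - a = b := by omega
      simp [hP, h1, h2, h2l]
  rw [← h0, ← hl]
  exact reachable_of_nat hW

lemma reachable_prefix {t : ℕ} {P : ℕ → Fin n} (h : NatWalk E P t) {m : ℕ} (hm : m ≤ t) :
    Reachable E (P 0) (P m) :=
  reachable_of_nat (fun k hk => h k (by omega))

end SCMaux2



open SCMaux SCMaux2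

/-- For every cycle `C` there exists a simple cycle (visiting no vertex
twice except the start/end vertex) consisting of edges of `C` whose mean weight is at most
the mean weight of `C`. Consequently, the minimum cycle mean over all cycles reachable from
a vertex `x` is attained by a simple cycle of length at most `n`. -/
theorem simple_cycle_attains_mcm {n : ℕ} (E : Fin n → Fin n → Prop)
    (w : Fin n → Fin n → ℕ) (hout : ∀ v : Fin n, ∃ u : Fin n, E v u)
    (x : Fin n) (hcyc : (cycleMeans E w x).Nonempty) :
    (∀ (t : ℕ) (p : Fin (t + 1) → Fin n), 0 < t → IsWalk E p → p (Fin.last t) = p 0 →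
      ∃ (s : ℕ) (q : Fin (s + 1) → Fin n), 0 < s ∧ IsWalk E q ∧ q (Fin.last s) = q 0 ∧
        (∀ i j : Fin s, q i.castSucc = q j.castSucc → i = j) ∧
        (∀ i : Fin s, ∃ j : Fin t, q i.castSucc = p j.castSucc ∧ q i.succ = p j.succ) ∧
        (walkWeight w q : ℝ) / (s : ℝ) ≤ (walkWeight w p : ℝ) / (t : ℝ)) ∧
    (∃ (s : ℕ) (q : Fin (s + 1) → Fin n), 0 < s ∧ s ≤ n ∧ IsWalk E q ∧
      q (Fin.last s) = q 0 ∧ (∀ i j : Fin s, q i.castSucc = q j.castSucc → i = j) ∧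
      Reachable E x (q 0) ∧ (walkWeight w q : ℝ) / (s : ℝ) = mcm E w x) := by
  have key : ∀ (t : ℕ) (p : Fin (t + 1) → Fin n), 0 < t → IsWalk E p → p (Fin.last t) = p 0 →
      ∃ (s : ℕ) (q : Fin (s + 1) → Fin n), 0 < s ∧ s ≤ n ∧ IsWalk E q ∧
        q (Fin.last s) = q 0 ∧
        (∀ i j : Fin s, q i.castSucc = q j.castSucc → i = j) ∧
        (∀ i : Fin s, ∃ j : Fin t, q i.castSucc = p j.castSucc ∧ q i.succ = p j.succ) ∧
        Reachable E (p 0) (q 0) ∧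
        (walkWeight w q : ℝ) / (s : ℝ) ≤ (walkWeight w p : ℝ) / (t : ℝ) := by
    intro t p ht hp hcy
    set P := ofFin p with hPdef
    have hW : NatWalk E P t := natWalk_ofFin hp
    have e0 : P 0 = p 0 := by
      rw [hPdef, ofFin_eq p (Nat.zero_le t)]
      exact congrArg p (Fin.ext (by simp))
    have el : P t = p (Fin.last t) := by
      rw [hPdef, ofFin_eq p (le_refl t)]
      rfl
    have hc : P t = P 0 := by rw [e0, el, hcy]
    obtain ⟨s, Q, hs, hQW, hQc, hQinj, hQsub, hQle⟩ := SCMaux.extract E w t P ht hW hc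
    have hqval : ∀ i : Fin s, toFin Q s i.castSucc = Q i := fun i => rfl
    have hqval' : ∀ i : Fin s, toFin Q s i.succ = Q (i + 1) := fun i => rfl
    refine ⟨s, toFin Q s, hs, ?_, isWalk_toFin hQW, ?_, ?_, ?_, ?_, ?_⟩
    · -- s ≤ n
      have hinj : Function.Injective (fun i : Fin s => Q i) := by
        intro i j h
        exact Fin.ext (hQinj i j i.isLt j.isLt h)
      simpa using Fintype.card_le_of_injective _ hinj
    · show Q ((Fin.last s : Fin (s + 1)) : ℕ) = Q (((0 : Fin (s + 1)) : ℕ))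
      simpa using hQc
    · intro i j h
      rw [hqval, hqval] at h
      exact Fin.ext (hQinj i j i.isLt j.isLt h)
    · intro i
      obtain ⟨j, hj, he1, he2⟩ := hQsub i i.isLt
      refine ⟨⟨j, hj⟩, ?_, ?_⟩
      · rw [hqval, he1, hPdef, ofFin_eq p (by omega)]
        congr 1
      · rw [hqval', he2, hPdef, ofFin_eq p (by omega)]
        congr 1
    · obtain ⟨j, hj, he1, _⟩ := hQsub 0 hs
      have : toFin Q s 0 = P j := he1
      rw [this, ← e0]
      exact reachable_prefix hW (le_of_lt hj)
    · rw [walkWeight_toFin, ← natWeight_ofFin w p]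
      exact hQle
  refine ⟨fun t p ht hp hcy => ?_, ?_⟩
  · obtain ⟨s, q, hs, _, h1, h2, h3, h4, _, h5⟩ := key t p ht hp hcy
    exact ⟨s, q, hs, h1, h2, h3, h4, h5⟩
  · set M : Set ℝ := {r | ∃ (s : ℕ) (q : Fin (s + 1) → Fin n), 0 < s ∧ s ≤ n ∧ IsWalk E q ∧
      q (Fin.last s) = q 0 ∧ (∀ i j : Fin s, q i.castSucc = q j.castSucc → i = j) ∧
      Reachable E x (q 0) ∧ r = (walkWeight w q : ℝ) / s} with hM
    have hMfin : M.Finite := by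
      apply Set.Finite.subset (Set.Finite.biUnion (Set.finite_Icc 1 n)
        (fun s _ => Set.finite_range (fun q : Fin (s + 1) → Fin n => (walkWeight w q : ℝ) / s)))
      rintro r ⟨s, q, hs, hsn, _, _, _, _, rfl⟩
      exact Set.mem_biUnion (Set.mem_Icc.mpr ⟨hs, hsn⟩) ⟨q, rfl⟩
    have hMsub : ∀ r ∈ cycleMeans E w x, ∃ r' ∈ M, r' ≤ r := by
      rintro r ⟨t, p, ht, hp, hcy, hreach, rfl⟩
      obtain ⟨s, q, hs, hsn, h1, h2, h3, _, h5, h6⟩ := key t p ht hp hcy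
      exact ⟨(walkWeight w q : ℝ) / s,
        ⟨s, q, hs, hsn, h1, h2, h3, reachable_trans hreach h5, rfl⟩, h6⟩
    have hMne : M.Nonempty := by
      obtain ⟨r, hr⟩ := hcyc
      obtain ⟨r', hr', _⟩ := hMsub r hr
      exact ⟨r', hr'⟩
    obtain ⟨m, hmM, hmin⟩ := Set.exists_min_image M id hMfin hMne
    have hmem : m ∈ cycleMeans E w x := by
      obtain ⟨s, q, hs, _, h1, h2, _, h4, h5⟩ := hmM
      exact ⟨s, q, hs, h1, h2, h4, h5⟩
    have hlb : ∀ r ∈ cycleMeans E w x, m ≤ r := by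
      intro r hr
      obtain ⟨r', hr', hle⟩ := hMsub r hr
      exact le_trans (hmin r' hr') hle
    have hmcm : mcm E w x = m := IsLeast.csInf_eq ⟨hmem, hlb⟩
    obtain ⟨s, q, hs, hsn, h1, h2, h3, h4, h5⟩ := hmM
    exact ⟨s, q, hs, hsn, h1, h2, h3, h4, by rw [hmcm, h5]⟩
end
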